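/- Let φ be a 3-CNF formula with m ≥ 2 clauses over n ≥ 4 variables, each clause containing exactly three literals on three pairwise distinct variables, and every variable occurring (in some polarity) in at least one clause. If G(φ) admits a strong conflict-free vertex-connection 3-coloring, then φ has a satisfying truth assignment. -/

import Mathlib

open SimpleGraph

/-- Vertices of the graph `G(φ)`: four special vertices `a, b, c, d`, a literal vertex
`lit x s` for each variable `x` and polarity `s` (`lit x true = v_x`,
`lit x false = v_x̄`), and for each clause `j` the triangle `cl j, cla j, clb j`. -/
inductive GV (n m : ℕ) where
  | a | b | c | d
  | lit : Fin n → Bool → GV n m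
  | cl : Fin m → GV n m
  | cla : Fin m → GV n m
  | clb : Fin m → GV n m
deriving DecidableEq

/-- The graph `G(φ)` built from a 3-CNF formula `φ` whose `j`-th clause consists of the
three literals `Cl j 0, Cl j 1, Cl j 2` (a literal being a pair of a variable and a
polarity). -/
def Gphi {n m : ℕ} (Cl : Fin m → Fin 3 → Fin n × Bool) : SimpleGraph (GV n m) :=
  SimpleGraph.fromRel (fun x y =>
    match x, y with
    | .a, .b => True
    | .a, .c => True
    | .a, .d => True
    | .b, .d => True
    | .c, .d => True
    | .lit x s, .lit x' s' => x = x' ∧ s ≠ s'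
    | .a, .lit _ _ => True
    | .cl j, .cla j' => j = j'
    | .cl j, .clb j' => j = j'
    | .cla j, .clb j' => j = j'
    | .cl j, .lit x s => ∃ t, Cl j t = (x, s)
    | .c, .cl _ => True
    | .a, .cla _ => True
    | .b, .clb _ => True
    | _, _ => False)

/-- `f` is a strong conflict-free vertex-connection coloring of `G`: any two distinct
vertices are joined by a shortest path on which some color occurs exactly once. -/
def IsSCFVC {V α : Type*} [DecidableEq α] (G : SimpleGraph V) (f : V → α) : Prop :=
  ∀ u v : V, u ≠ v → ∃ p : G.Walk u v, p.length = G.dist u v ∧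
    ∃ c : α, (p.support.map f).count c = 1

/-!
Adjacent vertices get distinct colours, so the triangle `a b d` uses all three colours, say
`A, B, D`; then `c` and every `cla j` get `B`, and one of the two literal vertices of each
variable gets `B`. Since `n ≥ 4`, every clause `j` misses some variable `x`; take its
`B`-coloured literal. All shortest paths from it to `clb j` have length three and colours
`B A B ?`, which forces `clb j` to `D` and hence `cl j` to `A`. The shortest paths to `cl j`
then have colours `B A ? A`, so one of them passes through a `D`-coloured literal of clause `j`.
Making the `D`-coloured literals true is consistent because the two literals of a variable are
adjacent.
-/

lemma Fin.exists_forall_ne_of_lt {k n : ℕ} (g : Fin k → Fin n) (h : k < n) :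
    ∃ x, ∀ i, g i ≠ x := by
  simpa [Function.Surjective] using mt (Fin.le_of_surjective g) (by omega)

lemma Fin.eq_of_ne_of_ne_three {a b c x : Fin 3} (hab : a ≠ b) (hac : a ≠ c) (hbc : b ≠ c)
    (hxa : x ≠ a) (hxb : x ≠ b) : x = c := by
  omega

lemma List.count_abab_ne_one {α : Type*} [DecidableEq α] (x y c : α) :
    [x, y, x, y].count c ≠ 1 := by
  by_cases hx : x = c <;> by_cases hy : y = c <;> simp [hx, hy]

lemma SimpleGraph.edist_eq_three_of_two_lt {V : Type*} {G : SimpleGraph V} {u w₁ w₂ v : V}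
    (h : 2 < G.edist u v) (h₁ : G.Adj u w₁) (h₂ : G.Adj w₁ w₂) (h₃ : G.Adj w₂ v) :
    G.edist u v = 3 :=
  le_antisymm (Walk.cons h₁ (.cons h₂ (.cons h₃ .nil))).edist_le (Order.add_one_le_of_lt h)

namespace IsSCFVC
variable {V α : Type*} [DecidableEq α] {G : SimpleGraph V} {f : V → α} {u v : V}

lemma ne_of_adj (hf : IsSCFVC G f) (h : G.Adj u v) : f u ≠ f v := by
  obtain ⟨p, hp, c, hc⟩ := hf u v h.ne
  rw [dist_eq_one_iff_adj.mpr h] at hp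
  intro huv
  match p, hp with
  | .cons _ .nil, _ => by_cases hc' : f v = c <;> simp_all

lemma exists_adj_adj_adj_count_eq_one (hf : IsSCFVC G f) (h : G.edist u v = 3) :
    ∃ w₁ w₂, G.Adj u w₁ ∧ G.Adj w₁ w₂ ∧ G.Adj w₂ v ∧
      ∃ c, [f u, f w₁, f w₂, f v].count c = 1 := by
  have hr : G.Reachable u v := reachable_of_edist_ne_top (by simp [h])
  have hne : u ≠ v := by rintro rfl; simp at h
  obtain ⟨p, hp, c, hc⟩ := hf u v hne
  have hp3 : p.length = 3 := by
    rw [hp]; exact_mod_cast hr.coe_dist_eq_edist.trans h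
  match p, hp3 with
  | .cons h₁ (.cons h₂ (.cons h₃ .nil)), _ => exact ⟨_, _, h₁, h₂, h₃, c, hc⟩

end IsSCFVC

namespace Gphi
variable {n m : ℕ} {Cl : Fin m → Fin 3 → Fin n × Bool}

lemma eq_of_adj_lit {x : Fin n} {s : Bool} {w : GV n m} (h : (Gphi Cl).Adj (.lit x s) w) :
    w = .a ∨ (∃ s', w = .lit x s') ∨ ∃ j, w = .cl j := by
  cases w <;> grind [Gphi, fromRel_adj]

lemma eq_of_adj_cl {j : Fin m} {w : GV n m} (h : (Gphi Cl).Adj w (.cl j)) :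
    w = .c ∨ w = .cla j ∨ w = .clb j ∨ ∃ t, w = .lit (Cl j t).1 (Cl j t).2 := by
  cases w <;> grind [Gphi, fromRel_adj]

lemma eq_of_adj_clb {j : Fin m} {w : GV n m} (h : (Gphi Cl).Adj w (.clb j)) :
    w = .b ∨ w = .cl j ∨ w = .cla j := by
  cases w <;> grind [Gphi, fromRel_adj]

section
variable {x : Fin n} {s : Bool} {j : Fin m}

lemma edist_lit_clb (hx : ∀ t, (Cl j t).1 ≠ x) :
    (Gphi Cl).edist (.lit x s) (.clb j) = 3 := by
  refine edist_eq_three_of_two_lt ?_ (w₁ := .a) (w₂ := .b) (by simp [Gphi]) (by simp [Gphi])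
    (by simp [Gphi])
  refine two_lt_edist_iff.mpr ⟨by simp, by simp [Gphi], ?_⟩
  refine Set.eq_empty_of_forall_notMem fun w hw => ?_
  rw [mem_commonNeighbors] at hw
  rcases eq_of_adj_lit hw.1 with rfl | ⟨s', rfl⟩ | ⟨j', rfl⟩ <;>
    grind [Gphi, fromRel_adj]

lemma edist_lit_cl (hx : ∀ t, (Cl j t).1 ≠ x) :
    (Gphi Cl).edist (.lit x s) (.cl j) = 3 := by
  refine edist_eq_three_of_two_lt ?_ (w₁ := .a) (w₂ := .c) (by simp [Gphi]) (by simp [Gphi])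
    (by simp [Gphi])
  refine two_lt_edist_iff.mpr ⟨by simp, by grind [Gphi, fromRel_adj], ?_⟩
  refine Set.eq_empty_of_forall_notMem fun w hw => ?_
  rw [mem_commonNeighbors] at hw
  rcases eq_of_adj_cl hw.2.symm with rfl | rfl | rfl | ⟨t, rfl⟩ <;>
    grind [Gphi, fromRel_adj]

lemma eq_of_adj_adj_adj_lit_clb {w₁ w₂ : GV n m}
    (hx : ∀ t, (Cl j t).1 ≠ x) (h₁ : (Gphi Cl).Adj (.lit x s) w₁)
    (h₂ : (Gphi Cl).Adj w₁ w₂) (h₃ : (Gphi Cl).Adj w₂ (.clb j)) :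
    w₁ = .a ∧ (w₂ = .b ∨ w₂ = .cla j) := by
  rcases eq_of_adj_lit h₁ with rfl | ⟨s', rfl⟩ | ⟨j', rfl⟩ <;>
    rcases eq_of_adj_clb h₃ with rfl | rfl | rfl <;> grind [Gphi, fromRel_adj]

lemma eq_of_adj_adj_adj_lit_cl {w₁ w₂ : GV n m}
    (hx : ∀ t, (Cl j t).1 ≠ x) (h₁ : (Gphi Cl).Adj (.lit x s) w₁)
    (h₂ : (Gphi Cl).Adj w₁ w₂) (h₃ : (Gphi Cl).Adj w₂ (.cl j)) :
    (w₁ = .a ∨ ∃ j', w₁ = .cl j') ∧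
      (w₂ = .c ∨ w₂ = .cla j ∨ ∃ t, w₂ = .lit (Cl j t).1 (Cl j t).2) := by
  rcases eq_of_adj_cl h₃ with rfl | rfl | rfl | ⟨t, rfl⟩ <;>
    rcases eq_of_adj_lit h₁ with rfl | ⟨s', rfl⟩ | ⟨j', rfl⟩ <;>
    grind [Gphi, fromRel_adj]

end

variable {f : GV n m → Fin 3}

lemma eq_color_a (hf : IsSCFVC (Gphi Cl) f) {x : Fin 3} (hb : x ≠ f .b) (hd : x ≠ f .d) :
    x = f .a :=
  Fin.eq_of_ne_of_ne_three (hf.ne_of_adj (u := .b) (v := .d) (by simp [Gphi]))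
    (hf.ne_of_adj (by simp [Gphi])).symm (hf.ne_of_adj (by simp [Gphi])).symm hb hd

lemma eq_color_b (hf : IsSCFVC (Gphi Cl) f) {x : Fin 3} (ha : x ≠ f .a) (hd : x ≠ f .d) :
    x = f .b :=
  Fin.eq_of_ne_of_ne_three (hf.ne_of_adj (u := .a) (v := .d) (by simp [Gphi]))
    (hf.ne_of_adj (by simp [Gphi])) (hf.ne_of_adj (by simp [Gphi])).symm ha hd

lemma eq_color_d (hf : IsSCFVC (Gphi Cl) f) {x : Fin 3} (ha : x ≠ f .a) (hb : x ≠ f .b) :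
    x = f .d :=
  Fin.eq_of_ne_of_ne_three (hf.ne_of_adj (u := .a) (v := .b) (by simp [Gphi]))
    (hf.ne_of_adj (by simp [Gphi])) (hf.ne_of_adj (by simp [Gphi])) ha hb

lemma color_c (hf : IsSCFVC (Gphi Cl) f) : f .c = f .b :=
  eq_color_b hf (hf.ne_of_adj (by simp [Gphi])).symm (hf.ne_of_adj (by simp [Gphi]))

lemma color_cla (hf : IsSCFVC (Gphi Cl) f) (j : Fin m) : f (.cla j) = f .b := by
  by_contra hb
  have hd := eq_color_d hf (hf.ne_of_adj (by simp [Gphi])).symm hb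
  have hcl : f (.cl j) ≠ f .b := color_c hf ▸ (hf.ne_of_adj (by simp [Gphi])).symm
  have hclb : f (.clb j) ≠ f .b := (hf.ne_of_adj (by simp [Gphi])).symm
  refine hf.ne_of_adj (u := .cl j) (v := .clb j) (by simp [Gphi]) ?_
  rw [eq_color_a hf hcl (hd ▸ hf.ne_of_adj (by simp [Gphi])),
    eq_color_a hf hclb (hd ▸ (hf.ne_of_adj (by simp [Gphi])).symm)]

lemma exists_lit_color_b (hf : IsSCFVC (Gphi Cl) f) (x : Fin n) : ∃ s, f (.lit x s) = f .b := by
  by_contra! h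
  have ha : ∀ s, f (.lit x s) ≠ f .a := fun s => (hf.ne_of_adj (by simp [Gphi])).symm
  refine hf.ne_of_adj (u := .lit x true) (v := .lit x false) (by simp [Gphi]) ?_
  rw [eq_color_d hf (ha _) (h _), eq_color_d hf (ha _) (h _)]

lemma color_clb_ne_a (hf : IsSCFVC (Gphi Cl) f) {x : Fin n} {j : Fin m}
    (hx : ∀ t, (Cl j t).1 ≠ x) : f (.clb j) ≠ f .a := by
  intro hclb
  obtain ⟨s, hs⟩ := exists_lit_color_b hf x
  obtain ⟨w₁, w₂, h₁, h₂, h₃, c, hc⟩ :=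
    hf.exists_adj_adj_adj_count_eq_one (edist_lit_clb (s := s) hx)
  obtain ⟨rfl, hw₂⟩ := eq_of_adj_adj_adj_lit_clb hx h₁ h₂ h₃
  have hb : f w₂ = f .b := by
    rcases hw₂ with rfl | rfl
    exacts [rfl, color_cla hf j]
  rw [hs, hb, hclb] at hc
  exact List.count_abab_ne_one _ _ _ hc

lemma color_cl (hf : IsSCFVC (Gphi Cl) f) (hn : 3 < n) (j : Fin m) : f (.cl j) = f .a := by
  obtain ⟨x, hx⟩ := Fin.exists_forall_ne_of_lt (fun t => (Cl j t).1) hn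
  have hclb : f (.clb j) = f .d :=
    eq_color_d hf (color_clb_ne_a hf hx) (hf.ne_of_adj (by simp [Gphi])).symm
  exact eq_color_a hf (color_c hf ▸ (hf.ne_of_adj (by simp [Gphi])).symm)
    (hclb ▸ hf.ne_of_adj (by simp [Gphi]))

lemma exists_lit_color_d (hf : IsSCFVC (Gphi Cl) f) (hn : 3 < n) (j : Fin m) :
    ∃ t, f (.lit (Cl j t).1 (Cl j t).2) = f .d := by
  obtain ⟨x, hx⟩ := Fin.exists_forall_ne_of_lt (fun t => (Cl j t).1) hn
  obtain ⟨s, hs⟩ := exists_lit_color_b hf x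
  obtain ⟨w₁, w₂, h₁, h₂, h₃, c, hc⟩ :=
    hf.exists_adj_adj_adj_count_eq_one (edist_lit_cl (s := s) hx)
  obtain ⟨hw₁, hw₂⟩ := eq_of_adj_adj_adj_lit_cl hx h₁ h₂ h₃
  have ha : f w₁ = f .a := by
    rcases hw₁ with rfl | ⟨j', rfl⟩
    exacts [rfl, color_cl hf hn j']
  have hb : f w₂ ≠ f .b := by
    intro hb
    rw [hs, ha, hb, color_cl hf hn j] at hc
    exact List.count_abab_ne_one _ _ _ hc
  rcases hw₂ with rfl | rfl | ⟨t, rfl⟩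
  · exact absurd (color_c hf) hb
  · exact absurd (color_cla hf j) hb
  · exact ⟨t, eq_color_d hf (hf.ne_of_adj (by simp [Gphi])).symm hb⟩

lemma decide_color_lit_eq (hf : IsSCFVC (Gphi Cl) f) {x : Fin n} {s : Bool}
    (h : f (.lit x s) = f .d) : decide (f (.lit x true) = f .d) = s := by
  cases s
  · simpa [← h] using hf.ne_of_adj (u := .lit x true) (v := .lit x false) (by simp [Gphi])
  · simpa using h

end Gphi

theorem stmt13_general {n m : ℕ} (hn : 4 ≤ n)
    (Cl : Fin m → Fin 3 → Fin n × Bool)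
    (hcol : ∃ f : GV n m → Fin 3, IsSCFVC (Gphi Cl) f) :
    ∃ σ : Fin n → Bool, ∀ j : Fin m, ∃ t : Fin 3, σ (Cl j t).1 = (Cl j t).2 := by
  obtain ⟨f, hf⟩ := hcol
  refine ⟨fun x => decide (f (.lit x true) = f .d), fun j => ?_⟩
  obtain ⟨t, ht⟩ := Gphi.exists_lit_color_d hf hn j
  exact ⟨t, Gphi.decide_color_lit_eq hf ht⟩

/-- If `G(φ)` admits a strong conflict-free vertex-connection `3`-coloring, where `φ` is a
3-CNF formula with `m ≥ 2` clauses over `n ≥ 4` variables, each clause on three pairwise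
distinct variables, every variable occurring in some clause, then `φ` has a satisfying
truth assignment. -/
theorem stmt13 {n m : ℕ} (hm : 2 ≤ m) (hn : 4 ≤ n)
    (Cl : Fin m → Fin 3 → Fin n × Bool)
    (hdistinct : ∀ j, ∀ t t' : Fin 3, t ≠ t' → (Cl j t).1 ≠ (Cl j t').1)
    (hoccur : ∀ x : Fin n, ∃ j t, (Cl j t).1 = x)
    (hcol : ∃ f : GV n m → Fin 3, IsSCFVC (Gphi Cl) f) :
    ∃ σ : Fin n → Bool, ∀ j : Fin m, ∃ t : Fin 3, σ (Cl j t).1 = (Cl j t).2 :=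
  stmt13_general hn Cl hcol
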